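/- For any unit vector u in R^k and any 0 < Δ ≤ π/2, the surface area of the set N(u, Δ) = { v ∈ S^{k-1} : |u·v| > cos Δ } is at most (2 Δ^{k-1}/(k-1)) · area(S^{k-2}). -/

import Mathlib

/-!
The cap `N(u, Δ)` has measure `k` times the volume of the cone
`{x | ‖x‖ < 1, ‖x‖ cos Δ < |⟪u, x⟫|}` over it. After a reflection taking `u` to the first basis
vector, the slice of this cone at height `t` lies in the `(k-1)`-ball of radius
`min √(1 - t²) (|t| tan Δ)`, of volume `r^(k-1) area(S^(k-2)) / (k-1)`. Integrating `r^(k-1)` over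
`0 ≤ t ≤ 1` is integrating `(k-1) ρ^(k-2)` over the planar sector of angle `Δ`; in polar coordinates
this is `(k-1)/k ∫₀^Δ sin^(k-2) φ dφ ≤ Δ^(k-1)/k`, an identity checked by differentiating
both sides in `Δ`. The endpoint `Δ = π/2`, where `tan` degenerates, follows by continuity of
measure from below.
-/

open MeasureTheory Real

/-- Surface area of the unit sphere `S^m ⊆ ℝ^(m+1)`: `2 π^((m+1)/2) / Γ((m+1)/2)`. -/
noncomputable def sphereArea (m : ℝ) : ℝ :=
  2 * Real.pi ^ ((m + 1) / 2) / Real.Gamma ((m + 1) / 2)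

open Filter Topology Metric Set intervalIntegral Submodule
open scoped ENNReal Pointwise RealInnerProductSpace

local notation "ℝ^" n:max => EuclideanSpace ℝ (Fin n)

theorem integral_sin_pow_le (n : ℕ) {θ : ℝ} (hθ : 0 ≤ θ) :
    ∫ φ in 0..θ, sin φ ^ n ≤ θ ^ (n + 1) / (n + 1) := by
  calc ∫ φ in 0..θ, sin φ ^ n ≤ ∫ φ in 0..θ, φ ^ n := by
        refine integral_mono_on hθ ((continuous_sin.pow n).intervalIntegrable _ _)
          ((continuous_pow n).intervalIntegrable _ _) fun φ hφ ↦ ?_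
        calc sin φ ^ n ≤ |sin φ| ^ n := (le_abs_self _).trans (abs_pow _ _).le
          _ ≤ φ ^ n := by
            simpa [abs_of_nonneg hφ.1] using
              pow_le_pow_left₀ (abs_nonneg _) (abs_sin_le_abs (x := φ)) n
    _ = θ ^ (n + 1) / (n + 1) := by simp [integral_pow]

theorem hasDerivAt_sin_pow_mul_cos_add_integral (n : ℕ) {θ : ℝ} (hθ : 0 ≤ sin θ) :
    HasDerivAt
      (fun φ ↦ sin φ ^ (n + 1) * cos φ / (n + 2) + ∫ s in cos φ..1, √(1 - s ^ 2) ^ (n + 1))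
      ((n + 1) / (n + 2) * sin θ ^ n) θ := by
  have hcont : Continuous fun s : ℝ ↦ √(1 - s ^ 2) ^ (n + 1) := by fun_prop
  have hint := (integral_hasDerivAt_left (hcont.intervalIntegrable _ 1)
    (hcont.stronglyMeasurableAtFilter _ _) hcont.continuousAt).comp θ (hasDerivAt_cos θ)
  have hpoly := (((hasDerivAt_sin θ).pow (n + 1)).mul (hasDerivAt_cos θ)).div_const ((n : ℝ) + 2)
  refine (hpoly.add hint).congr_deriv ?_
  have : √(1 - cos θ ^ 2) = sin θ := by rw [← sin_sq, sqrt_sq hθ]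
  simp only [Pi.pow_apply, this, Nat.add_sub_cancel]
  field_simp
  push_cast
  linear_combination ((n : ℝ) + 1) * sin θ ^ n * sin_sq_add_cos_sq θ

theorem sin_pow_mul_cos_add_integral_sqrt_pow (n : ℕ) {θ : ℝ} (hθ₀ : 0 ≤ θ) (hθπ : θ ≤ π) :
    sin θ ^ (n + 1) * cos θ / (n + 2) + ∫ s in cos θ..1, √(1 - s ^ 2) ^ (n + 1) =
      (n + 1) / (n + 2) * ∫ φ in 0..θ, sin φ ^ n := by
  rw [← intervalIntegral.integral_const_mul, integral_eq_sub_of_hasDerivAt (fun φ hφ ↦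
    hasDerivAt_sin_pow_mul_cos_add_integral n ?_)
    ((by fun_prop : Continuous fun φ ↦ (n + 1) / (n + 2) * sin φ ^ n).intervalIntegrable _ _)]
  · simp
  · rw [uIcc_of_le hθ₀] at hφ
    exact sin_nonneg_of_nonneg_of_le_pi hφ.1 (hφ.2.trans hθπ)

noncomputable def coneProfile (Δ s : ℝ) : ℝ := min √(1 - s ^ 2) (s * tan Δ)

theorem continuous_coneProfile (Δ : ℝ) : Continuous (coneProfile Δ) := by
  unfold coneProfile
  fun_prop

section ConeProfile

variable {Δ : ℝ} (hΔ₀ : 0 ≤ Δ) (hΔ : Δ < π / 2)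
include hΔ₀ hΔ

theorem coneProfile_of_le_cos {s : ℝ} (hs₀ : 0 ≤ s) (hs : s ≤ cos Δ) :
    coneProfile Δ s = s * tan Δ := by
  have hcos : 0 < cos Δ := cos_pos_of_mem_Ioo ⟨by linarith [pi_pos], hΔ⟩
  have htan : 0 ≤ tan Δ := tan_nonneg_of_nonneg_of_le_pi_div_two hΔ₀ hΔ.le
  refine min_eq_right ((le_sqrt (by positivity) (by nlinarith [cos_le_one Δ])).2 ?_)
  rw [tan_eq_sin_div_cos, mul_div_assoc', div_pow, div_le_iff₀ (by positivity)]
  nlinarith [sin_sq_add_cos_sq Δ, mul_self_le_mul_self hs₀ hs]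

theorem coneProfile_of_cos_le {s : ℝ} (hs : cos Δ ≤ s) :
    coneProfile Δ s = √(1 - s ^ 2) := by
  have hcos : 0 < cos Δ := cos_pos_of_mem_Ioo ⟨by linarith [pi_pos], hΔ⟩
  have htan : 0 ≤ tan Δ := tan_nonneg_of_nonneg_of_le_pi_div_two hΔ₀ hΔ.le
  refine min_eq_left (sqrt_le_iff.2 ⟨by nlinarith, ?_⟩)
  rw [tan_eq_sin_div_cos, mul_div_assoc', div_pow, le_div_iff₀ (by positivity)]
  nlinarith [sin_sq_add_cos_sq Δ, mul_self_le_mul_self hcos.le hs]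

theorem coneProfile_nonneg {s : ℝ} (hs : 0 ≤ s) : 0 ≤ coneProfile Δ s :=
  le_min (sqrt_nonneg _) (mul_nonneg hs (tan_nonneg_of_nonneg_of_le_pi_div_two hΔ₀ hΔ.le))

theorem coneProfile_of_one_le {s : ℝ} (hs : 1 ≤ s) : coneProfile Δ s = 0 := by
  rw [coneProfile_of_cos_le hΔ₀ hΔ ((cos_le_one Δ).trans hs), sqrt_eq_zero_of_nonpos (by nlinarith)]

theorem lt_coneProfile_abs {ρ t s : ℝ} (hρ : ρ ^ 2 = t ^ 2 + s ^ 2) (hρ₀ : 0 ≤ ρ) (hs : 0 ≤ s)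
    (h₁ : ρ < 1) (h₂ : ρ * cos Δ < |t|) : s < coneProfile Δ |t| := by
  have hcos : 0 < cos Δ := cos_pos_of_mem_Ioo ⟨by linarith [pi_pos], hΔ⟩
  have hsin : 0 ≤ sin Δ := sin_nonneg_of_nonneg_of_le_pi hΔ₀ (by linarith)
  refine lt_min ((lt_sqrt hs).2 (by rw [sq_abs]; nlinarith)) ?_
  have hsq : (ρ * cos Δ) ^ 2 < |t| ^ 2 := pow_lt_pow_left₀ h₂ (by positivity) two_ne_zero
  rw [tan_eq_sin_div_cos, mul_div_assoc', lt_div_iff₀ hcos]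
  refine lt_of_pow_lt_pow_left₀ 2 (by positivity) ?_
  rw [sq_abs] at hsq
  rw [mul_pow, mul_pow, sq_abs, sin_sq]
  nlinarith

theorem integral_coneProfile_pow (n : ℕ) :
    ∫ s in 0..1, coneProfile Δ s ^ (n + 1) =
      sin Δ ^ (n + 1) * cos Δ / (n + 2) + ∫ s in cos Δ..1, √(1 - s ^ 2) ^ (n + 1) := by
  have hcos : 0 < cos Δ := cos_pos_of_mem_Ioo ⟨by linarith [pi_pos], hΔ⟩
  have hint : ∀ a b, IntervalIntegrable (fun s ↦ coneProfile Δ s ^ (n + 1)) volume a b :=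
    fun a b ↦ ((continuous_coneProfile Δ).pow _).intervalIntegrable a b
  rw [← integral_add_adjacent_intervals (hint 0 (cos Δ)) (hint _ 1)]
  congr 1
  · rw [integral_congr (g := fun s ↦ tan Δ ^ (n + 1) * s ^ (n + 1)) fun s hs ↦ ?_]
    · rw [intervalIntegral.integral_const_mul, integral_pow, tan_eq_sin_div_cos, div_pow,
        pow_succ (cos Δ) (n + 1)]
      field_simp
      push_cast
      ring
    · rw [uIcc_of_le hcos.le] at hs
      simp only [coneProfile_of_le_cos hΔ₀ hΔ hs.1 hs.2, mul_pow, mul_comm]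
  · refine integral_congr fun s hs ↦ ?_
    rw [uIcc_of_le (cos_le_one Δ)] at hs
    simp only [coneProfile_of_cos_le hΔ₀ hΔ hs.1]

theorem integral_coneProfile_pow_le (n : ℕ) :
    ∫ s in 0..1, coneProfile Δ s ^ (n + 1) ≤ Δ ^ (n + 1) / (n + 2) := by
  rw [integral_coneProfile_pow hΔ₀ hΔ, sin_pow_mul_cos_add_integral_sqrt_pow n hΔ₀ (by linarith)]
  calc (n + 1) / (n + 2) * ∫ φ in 0..Δ, sin φ ^ n
      ≤ (n + 1) / (n + 2) * (Δ ^ (n + 1) / (n + 1)) :=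
        mul_le_mul_of_nonneg_left (integral_sin_pow_le n hΔ₀) (by positivity)
    _ = Δ ^ (n + 1) / (n + 2) := by field_simp

theorem integrable_coneProfile_abs_pow (n : ℕ) :
    Integrable fun t ↦ coneProfile Δ |t| ^ (n + 1) := by
  have hcont : Continuous fun t ↦ coneProfile Δ |t| ^ (n + 1) :=
    ((continuous_coneProfile Δ).comp continuous_abs).pow _
  refine hcont.integrable_of_hasCompactSupport
    (HasCompactSupport.intro (isCompact_Icc (a := -1) (b := 1)) fun t ht ↦ ?_)
  rw [mem_Icc, ← abs_le, not_le] at ht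
  rw [coneProfile_of_one_le hΔ₀ hΔ ht.le, zero_pow n.succ_ne_zero]

theorem integral_coneProfile_abs_pow_le (n : ℕ) :
    ∫ t, coneProfile Δ |t| ^ (n + 1) ≤ 2 * Δ ^ (n + 1) / (n + 2) := by
  rw [integral_comp_abs (f := fun s ↦ coneProfile Δ s ^ (n + 1)),
    setIntegral_eq_of_subset_of_forall_sdiff_eq_zero measurableSet_Ioi Ioc_subset_Ioi_self
      fun s hs ↦ ?_, ← integral_of_le zero_le_one, mul_div_assoc]
  · gcongr
    exact integral_coneProfile_pow_le hΔ₀ hΔ n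
  · rw [coneProfile_of_one_le hΔ₀ hΔ (not_le.1 fun h ↦ hs.2 ⟨hs.1, h⟩).le,
      zero_pow n.succ_ne_zero]

end ConeProfile

theorem sphereArea_pos {m : ℝ} (hm : -1 < m) : 0 < sphereArea m := by
  have : 0 < Gamma ((m + 1) / 2) := Gamma_pos_of_pos (by linarith)
  unfold sphereArea
  positivity

theorem volume_ball_eq_sphereArea (n : ℕ) (x : ℝ^(n + 1)) {r : ℝ} (hr : 0 ≤ r) :
    volume (ball x r) = ENNReal.ofReal (r ^ (n + 1) * (sphereArea n / (n + 1))) := by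
  rw [EuclideanSpace.volume_ball, Fintype.card_fin, ← ENNReal.ofReal_pow hr,
    ← ENNReal.ofReal_mul (by positivity)]
  have hΓ : 0 < Gamma ((n + 1) / 2) := Gamma_pos_of_pos (by positivity)
  have hπ : √π ^ (n + 1) = π ^ (((n : ℝ) + 1) / 2) := by
    rw [sqrt_eq_rpow, ← rpow_natCast, ← rpow_mul pi_pos.le]
    push_cast
    ring_nf
  rw [sphereArea, Nat.cast_succ, Gamma_add_one (by positivity), hπ]
  field_simp

section Slicing

variable {n : ℕ}

def headTail (x : ℝ^(n + 1)) : ℝ × ℝ^n :=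
  (x 0, WithLp.toLp 2 (Fin.tail x.ofLp))

theorem measurePreserving_headTail : MeasurePreserving (headTail (n := n)) := by
  have h := (volume_preserving_piFinSuccAbove (fun _ : Fin (n + 1) ↦ ℝ) 0).comp
    (PiLp.volume_preserving_ofLp (Fin (n + 1)))
  have h' := (MeasurePreserving.id (volume : Measure ℝ)).prod (PiLp.volume_preserving_toLp (Fin n))
  rw [← Measure.volume_eq_prod] at h'
  exact h'.comp h

theorem norm_sq_eq_sq_add_norm_sq_headTail (x : ℝ^(n + 1)) :
    ‖x‖ ^ 2 = x 0 ^ 2 + ‖(headTail x).2‖ ^ 2 := by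
  simp only [EuclideanSpace.real_norm_sq_eq, Fin.sum_univ_succ, headTail]
  rfl

theorem volume_setOf_norm_tail_lt {r : ℝ → ℝ} (hr : Measurable r) :
    volume {x : ℝ^(n + 1) | ‖(headTail x).2‖ < r (x 0)} =
      ∫⁻ t, volume (ball (0 : ℝ^n) (r t)) := by
  have hs : MeasurableSet {p : ℝ × ℝ^n | ‖p.2‖ < r p.1} :=
    measurableSet_lt (by fun_prop) (hr.comp measurable_fst)
  calc volume {x : ℝ^(n + 1) | ‖(headTail x).2‖ < r (x 0)}
      = volume (headTail ⁻¹' {p : ℝ × ℝ^n | ‖p.2‖ < r p.1}) := rfl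
    _ = volume {p : ℝ × ℝ^n | ‖p.2‖ < r p.1} :=
      measurePreserving_headTail.measure_preimage hs.nullMeasurableSet
    _ = ∫⁻ t, volume (ball (0 : ℝ^n) (r t)) := by
      rw [Measure.volume_eq_prod, Measure.prod_apply hs]
      simp only [ball_zero_eq]
      rfl

end Slicing

section Cone

variable {E : Type*} [NormedAddCommGroup E] [InnerProductSpace ℝ E]

def sphereCap (u : E) (Δ : ℝ) : Set (sphere (0 : E) 1) := {v | cos Δ < |⟪u, (v : E)⟫|}

def capCone (u : E) (Δ : ℝ) : Set E := {x | ‖x‖ < 1 ∧ ‖x‖ * cos Δ < |⟪u, x⟫|}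

theorem measurableSet_sphereCap [MeasurableSpace E] [OpensMeasurableSpace E] (u : E) (Δ : ℝ) :
    MeasurableSet (sphereCap u Δ) :=
  measurableSet_lt measurable_const (by fun_prop)

theorem Ioo_smul_image_sphereCap (u : E) (Δ : ℝ) :
    Ioo (0 : ℝ) 1 • ((↑) '' sphereCap u Δ) = capCone u Δ := by
  ext x
  constructor
  · rintro ⟨r, ⟨hr0, hr1⟩, _, ⟨v, hv, rfl⟩, rfl⟩
    have hv1 : ‖(v : E)‖ = 1 := norm_eq_of_mem_sphere v
    simp only [capCone, mem_ofPred_eq, norm_smul, hv1, norm_of_nonneg hr0.le, mul_one,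
      real_inner_smul_right, abs_mul, abs_of_pos hr0]
    exact ⟨hr1, mul_lt_mul_of_pos_left hv hr0⟩
  · rintro ⟨hx1, hx⟩
    have hx0 : 0 < ‖x‖ := norm_pos_iff.2 fun h ↦ by simp [h] at hx
    refine ⟨‖x‖, ⟨hx0, hx1⟩, ‖x‖⁻¹ • x, ⟨⟨‖x‖⁻¹ • x, ?_⟩, ?_, rfl⟩, smul_inv_smul₀ hx0.ne' x⟩
    · simp [norm_smul, hx0.ne']
    · rw [sphereCap, mem_ofPred_eq, real_inner_smul_right, abs_mul, abs_of_pos (inv_pos.2 hx0),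
        lt_inv_mul_iff₀ hx0]
      exact hx

theorem volume_capCone_eq [FiniteDimensional ℝ E] [MeasurableSpace E] [BorelSpace E]
    {u v : E} (h : ‖u‖ = ‖v‖) (Δ : ℝ) :
    volume (capCone u Δ) = volume (capCone v Δ) := by
  set R := reflection (ℝ ∙ (u - v))ᗮ
  have : R ⁻¹' capCone v Δ = capCone u Δ := by
    ext x
    rw [capCone, capCone, mem_preimage, mem_ofPred_eq, mem_ofPred_eq,
      LinearIsometryEquiv.norm_map, ← reflection_sub h, LinearIsometryEquiv.inner_map_map]
  rw [← this, R.measurePreserving.measure_preimage_emb R.toHomeomorph.measurableEmbedding]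

end Cone

theorem volume_capCone_single_le (n : ℕ) {Δ : ℝ} (hΔ₀ : 0 ≤ Δ) (hΔ : Δ < π / 2) :
    volume (capCone (EuclideanSpace.single 0 1 : ℝ^(n + 2)) Δ) ≤
      ENNReal.ofReal (2 * Δ ^ (n + 1) / (n + 2) * (sphereArea n / (n + 1))) := by
  have hA := sphereArea_pos (m := n) (by linarith [n.cast_nonneg (α := ℝ)])
  have hsub : capCone (EuclideanSpace.single 0 1 : ℝ^(n + 2)) Δ ⊆
      {x | ‖(headTail x).2‖ < coneProfile Δ |x 0|} := by
    rintro x ⟨hx₁, hx₂⟩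
    rw [EuclideanSpace.inner_single_left, map_one, one_mul] at hx₂
    exact lt_coneProfile_abs hΔ₀ hΔ (norm_sq_eq_sq_add_norm_sq_headTail x) (norm_nonneg x)
      (norm_nonneg _) hx₁ hx₂
  have hprof : Continuous fun t ↦ coneProfile Δ |t| :=
    (continuous_coneProfile Δ).comp continuous_abs
  calc volume (capCone (EuclideanSpace.single 0 1 : ℝ^(n + 2)) Δ)
      ≤ ∫⁻ t, volume (ball (0 : ℝ^(n + 1)) (coneProfile Δ |t|)) :=
        (measure_mono hsub).trans_eq (volume_setOf_norm_tail_lt hprof.measurable)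
    _ = ∫⁻ t, ENNReal.ofReal (coneProfile Δ |t| ^ (n + 1) * (sphereArea n / (n + 1))) := by
        simp_rw [volume_ball_eq_sphereArea n _ (coneProfile_nonneg hΔ₀ hΔ (abs_nonneg _))]
    _ = ENNReal.ofReal (∫ t, coneProfile Δ |t| ^ (n + 1) * (sphereArea n / (n + 1))) := by
        rw [ofReal_integral_eq_lintegral_ofReal
          ((integrable_coneProfile_abs_pow hΔ₀ hΔ n).mul_const _)
          (ae_of_all _ fun t ↦ by
            have := coneProfile_nonneg hΔ₀ hΔ (abs_nonneg t)
            positivity)]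
    _ ≤ ENNReal.ofReal (2 * Δ ^ (n + 1) / (n + 2) * (sphereArea n / (n + 1))) := by
        rw [MeasureTheory.integral_mul_const]
        gcongr
        exact integral_coneProfile_abs_pow_le hΔ₀ hΔ n

theorem toSphere_sphereCap_le (n : ℕ) {u : ℝ^(n + 2)} (hu : ‖u‖ = 1) {Δ : ℝ} (hΔ₀ : 0 ≤ Δ)
    (hΔ : Δ < π / 2) :
    (volume : Measure (ℝ^(n + 2))).toSphere (sphereCap u Δ) ≤
      ENNReal.ofReal (2 * Δ ^ (n + 1) / (n + 1) * sphereArea n) := by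
  have hnorm : ‖u‖ = ‖(EuclideanSpace.single 0 1 : ℝ^(n + 2))‖ := by simp [hu]
  rw [Measure.toSphere_apply' _ (measurableSet_sphereCap u Δ), Ioo_smul_image_sphereCap,
    volume_capCone_eq hnorm, finrank_euclideanSpace_fin]
  calc ((n + 2 : ℕ) : ℝ≥0∞) * volume (capCone (EuclideanSpace.single 0 1 : ℝ^(n + 2)) Δ)
      ≤ ((n + 2 : ℕ) : ℝ≥0∞) *
          ENNReal.ofReal (2 * Δ ^ (n + 1) / (n + 2) * (sphereArea n / (n + 1))) := by
        gcongr
        exact volume_capCone_single_le n hΔ₀ hΔ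
    _ = ENNReal.ofReal (2 * Δ ^ (n + 1) / (n + 1) * sphereArea n) := by
        rw [← ENNReal.ofReal_natCast, ← ENNReal.ofReal_mul (by positivity)]
        congr 1
        push_cast
        field_simp

theorem measure_setOf_lt_le_of_tendsto {α : Type*} [MeasurableSpace α] (μ : Measure α)
    (f : α → ℝ) {c : ℕ → ℝ} {c₀ : ℝ} {B : ℝ≥0∞} (hc : Antitone c)
    (hlim : Tendsto c atTop (𝓝 c₀)) (h : ∀ j, μ {x | c j < f x} ≤ B) :
    μ {x | c₀ < f x} ≤ B := by
  have hunion : {x | c₀ < f x} = ⋃ j, {x | c j < f x} := by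
    ext x
    simp only [mem_ofPred_eq, mem_iUnion]
    exact ⟨fun hx ↦ (hlim.eventually_lt_const hx).exists,
      fun ⟨j, hj⟩ ↦ (hc.le_of_tendsto hlim j).trans_lt hj⟩
  have hmono : Monotone fun j ↦ {x | c j < f x} := fun i j hij x hx ↦ (hc hij).trans_lt hx
  rw [hunion, hmono.measure_iUnion]
  exact iSup_le h

/-- For a unit vector `u ∈ ℝ^k` and `0 < Δ ≤ π/2`, the surface area of
`N(u, Δ) = { v ∈ S^(k-1) : |u·v| > cos Δ }` is at most `(2 Δ^(k-1)/(k-1)) · area(S^(k-2))`. -/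
theorem area_cap_le (k : ℕ) (hk : 2 ≤ k) (u : EuclideanSpace ℝ (Fin k)) (hu : ‖u‖ = 1)
    (Δ : ℝ) (hΔ : 0 < Δ) (hΔ' : Δ ≤ Real.pi / 2) :
    (volume : Measure (EuclideanSpace ℝ (Fin k))).toSphere
        {v : Metric.sphere (0 : EuclideanSpace ℝ (Fin k)) 1 |
          Real.cos Δ < |(inner ℝ u (v : EuclideanSpace ℝ (Fin k)) : ℝ)|} ≤
      ENNReal.ofReal (2 * Δ ^ (k - 1) / ((k : ℝ) - 1) * sphereArea ((k : ℝ) - 2)) := by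
  obtain ⟨n, rfl⟩ : ∃ n, k = n + 2 := ⟨k - 2, by omega⟩
  obtain ⟨δ, hδ_mono, hδ_mem, hδ_lim⟩ := exists_seq_strictMono_tendsto' hΔ
  have hδ₀ : ∀ j, 0 ≤ δ j := fun j ↦ (hδ_mem j).1.le
  refine measure_setOf_lt_le_of_tendsto _ _ (fun i j hij ↦ ?_)
    ((continuous_cos.tendsto Δ).comp hδ_lim) fun j ↦ ?_
  · exact cos_le_cos_of_nonneg_of_le_pi (hδ₀ i) (by linarith [(hδ_mem j).2])
      (hδ_mono.monotone hij)
  · refine (toSphere_sphereCap_le n hu (hδ₀ j) ((hδ_mem j).2.trans_le hΔ')).trans ?_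
    have := sphereArea_pos (m := n) (by linarith [n.cast_nonneg (α := ℝ)])
    rw [show ((n + 2 : ℕ) : ℝ) - 2 = n by push_cast; ring,
      show ((n + 2 : ℕ) : ℝ) - 1 = n + 1 by push_cast; ring, show n + 2 - 1 = n + 1 from rfl]
    gcongr
    exacts [hδ₀ j, (hδ_mem j).2.le]
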